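/- Let A and B be complex unital Banach algebras, fix c ∈ A and an invertible d ∈ B, and let φ: A → B be a bijective linear map such that φ(a)φ(b) = d whenever ab = c. Set z = φ(1) and define ψ(x) = z⁻¹ φ(x). Then ψ is a unital bijective linear map that strongly preserves invertibility: ψ(1) = 1, and ψ(x⁻¹) = ψ(x)⁻¹ for every invertible x ∈ A. -/

import Mathlib

/-!
If `a * b = c` then `φ a * φ b = d`, so for a unit `u` both `φ u * φ (u⁻¹ * c)` and
`φ (c * u⁻¹) * φ u` equal the unit `d`: hence `φ u` is invertible, with inverse `g (u⁻¹)` for the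
linear map `g y = φ (y * c) * d⁻¹`. Hua's identity `(b⁻¹ * (1 + b))⁻¹ = 1 - (1 + b)⁻¹` holds in `A`
and in `B`; transporting it through the additive maps `φ` and `g` gives
`φ (b⁻¹) = z * φ(b)⁻¹ * z`, `z = φ 1`, whenever `b` and `1 + b` are units. Every unit becomes
such a `b` after multiplication by a small nonzero scalar, so `φ (x⁻¹) = z * φ(x)⁻¹ * z` for all
units `x`, which is `ψ (x⁻¹) = ψ(x)⁻¹`.
-/

open scoped Ring Topology

def PreservesProductsAt {M N : Type*} [Mul M] [Mul N] (f : M → N) (c : M) (d : N) : Prop :=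
  ∀ a b : M, a * b = c → f a * f b = d

def IsInverseOnUnits {M N : Type*} [Monoid M] [Monoid N] (f g : M → N) : Prop :=
  ∀ u : Mˣ, f u * g ↑u⁻¹ = 1 ∧ g ↑u⁻¹ * f u = 1

theorem PreservesProductsAt.isInverseOnUnits {M N : Type*} [Monoid M] [Monoid N] {f : M → N}
    {c : M} {d : Nˣ} (h : PreservesProductsAt f c d) :
    IsInverseOnUnits f (fun y => f (y * c) * ↑d⁻¹) := by
  intro u
  have right : f u * (f (↑u⁻¹ * c) * ↑d⁻¹) = 1 := by
    rw [← mul_assoc, h _ _ (by rw [Units.mul_inv_cancel_left]), Units.mul_inv]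
  have left : ↑d⁻¹ * f (c * ↑u⁻¹) * f u = 1 := by
    rw [mul_assoc, h _ _ (by rw [Units.inv_mul_cancel_right]), Units.inv_mul]
  rw [left_inv_eq_right_inv left right] at left
  exact ⟨right, left⟩

theorem Units.val_inv_mul_one_add {R : Type*} [Ring R] (b s : Rˣ) (hs : (s : R) = 1 + b) :
    ((b⁻¹ * s : Rˣ) : R) = ↑b⁻¹ + 1 ∧ (((b⁻¹ * s)⁻¹ : Rˣ) : R) = 1 - ↑s⁻¹ := by
  constructor
  · rw [Units.val_mul, hs, mul_add, mul_one, Units.inv_mul]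
  · rw [mul_inv_rev, inv_inv, Units.val_mul, ← Units.inv_mul s, ← mul_sub_one, hs,
      add_sub_cancel_left]

theorem IsInverseOnUnits.map_inv_of_isUnit_one_add {A B F G : Type*} [Ring A] [Ring B]
    [FunLike F A B] [AddMonoidHomClass F A B] [FunLike G A B] [AddMonoidHomClass G A B]
    {f : F} {g : G} (hfg : IsInverseOnUnits f g) (b : Aˣ) (hb : IsUnit (1 + (b : A))) :
    f ↑b⁻¹ = f 1 * g ↑b⁻¹ * f 1 := by
  obtain ⟨s, hs⟩ := hb
  obtain ⟨hT, hTinv⟩ := Units.val_inv_mul_one_add b s hs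
  have hg1 : g 1 * f 1 = 1 := by simpa only [inv_one, Units.val_one] using (hfg 1).2
  -- `g` of the inverse of `T = b⁻¹ * s` is `f(1)⁻¹ - f(s)⁻¹`, whose inverse is `f s * f(b)⁻¹ * f 1`.
  have hX : g ↑(b⁻¹ * s)⁻¹ * (f s * g ↑b⁻¹ * f 1) = 1 := by
    rw [hTinv, map_sub, sub_mul]
    calc g 1 * (f s * g ↑b⁻¹ * f 1) - g ↑s⁻¹ * (f s * g ↑b⁻¹ * f 1)
        = g 1 * f 1 * (g ↑b⁻¹ * f 1) + g 1 * (f b * g ↑b⁻¹) * f 1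
            - g ↑s⁻¹ * f s * (g ↑b⁻¹ * f 1) := by rw [hs, map_add]; noncomm_ring
      _ = 1 := by rw [(hfg b).1, mul_one, hg1, (hfg s).2]; abel
  have hfT : f ↑(b⁻¹ * s) = f s * g ↑b⁻¹ * f 1 := left_inv_eq_right_inv (hfg _).1 hX
  rw [hT, map_add, hs, map_add, add_mul, add_mul, (hfg b).1, one_mul] at hfT
  exact add_right_cancel hfT

theorem exists_ne_zero_isUnit_one_add_smul (𝕜 : Type*) {A : Type*} [NontriviallyNormedField 𝕜]
    [NormedRing A] [NormedAlgebra 𝕜 A] [CompleteSpace A] (x : A) :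
    ∃ t : 𝕜, t ≠ 0 ∧ IsUnit (1 + t • x) := by
  have hcont : Continuous fun t : 𝕜 => 1 + t • x := by fun_prop
  have hnear : ∀ᶠ t in 𝓝 (0 : 𝕜), IsUnit (1 + t • x) :=
    (hcont.tendsto' 0 1 (by simp)).eventually (Units.isOpen.mem_nhds isUnit_one)
  exact ((hnear.filter_mono nhdsWithin_le_nhds).and (self_mem_nhdsWithin (s := {0}ᶜ))).exists.imp
    fun _ ⟨hunit, hne⟩ => ⟨hne, hunit⟩

theorem IsInverseOnUnits.map_inv {𝕜 A B : Type*} [NontriviallyNormedField 𝕜]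
    [NormedRing A] [NormedAlgebra 𝕜 A] [CompleteSpace A] [Ring B] [Algebra 𝕜 B]
    {f g : A →ₗ[𝕜] B} (hfg : IsInverseOnUnits f g) (x : Aˣ) :
    f ↑x⁻¹ = f 1 * g ↑x⁻¹ * f 1 := by
  obtain ⟨t, ht, hunit⟩ := exists_ne_zero_isUnit_one_add_smul 𝕜 (x : A)
  have key := hfg.map_inv_of_isUnit_one_add (Units.mk0 t ht • x) hunit
  simp only [Units.smul_inv, Units.val_smul, Units.smul_def, Units.val_inv_eq_inv_val,
    Units.val_mk0, map_smul, mul_smul_comm, smul_mul_assoc] at key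
  exact smul_right_injective B (inv_ne_zero ht) key

theorem stmt13_general {A B : Type*} [NormedRing A] [NormedAlgebra ℂ A] [CompleteSpace A]
    [NormedRing B] [NormedAlgebra ℂ B]
    (c : A) (d : B) (hd : IsUnit d)
    (φ : A →ₗ[ℂ] B) (hbij : Function.Bijective φ)
    (h : ∀ a b : A, a * b = c → φ a * φ b = d) :
    IsUnit (φ 1) ∧
      Function.Bijective (fun x : A => Ring.inverse (φ 1) * φ x) ∧
      Ring.inverse (φ 1) * φ 1 = 1 ∧
      ∀ x : Aˣ, Ring.inverse (φ 1) * φ ↑x⁻¹ = Ring.inverse (Ring.inverse (φ 1) * φ ↑x) := by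
  obtain ⟨D, rfl⟩ := hd
  set g : A →ₗ[ℂ] B := LinearMap.mulRight ℂ ↑D⁻¹ ∘ₗ φ ∘ₗ LinearMap.mulRight ℂ c
  have hφg : IsInverseOnUnits φ g := PreservesProductsAt.isInverseOnUnits h
  have hinv (u : Aˣ) : IsUnit (φ u) ∧ (φ u)⁻¹ʳ = g ↑u⁻¹ :=
    let U : Bˣ := ⟨φ u, g ↑u⁻¹, (hφg u).1, (hφg u).2⟩
    ⟨U.isUnit, Ring.inverse_unit U⟩
  have hz : IsUnit (φ 1) := by simpa using (hinv 1).1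
  refine ⟨hz, ?_, Ring.inverse_mul_cancel _ hz, fun x => ?_⟩
  · rw [Ring.inverse_of_isUnit hz]
    exact (Units.mulLeft hz.unit⁻¹).bijective.comp hbij
  · rw [hφg.map_inv x, Ring.inverse_mul (.inl hz.ringInverse), Ring.inverse_inverse hz,
      (hinv x).2, ← mul_assoc, ← mul_assoc, Ring.inverse_mul_cancel _ hz, one_mul]

/-- Theorem 4.1(2). With hypotheses as before and `z = φ 1`, the map
`ψ x = z⁻¹ * φ x` is a unital bijective (linear) map which strongly preserves
invertibility: `ψ 1 = 1` and `ψ (x⁻¹) = (ψ x)⁻¹` for all invertible `x`. -/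
theorem stmt13 {A B : Type*} [NormedRing A] [NormedAlgebra ℂ A] [CompleteSpace A]
    [NormedRing B] [NormedAlgebra ℂ B] [CompleteSpace B]
    (c : A) (d : B) (hd : IsUnit d)
    (φ : A →ₗ[ℂ] B) (hbij : Function.Bijective φ)
    (h : ∀ a b : A, a * b = c → φ a * φ b = d) :
    IsUnit (φ 1) ∧
      Function.Bijective (fun x : A => Ring.inverse (φ 1) * φ x) ∧
      Ring.inverse (φ 1) * φ 1 = 1 ∧
      ∀ x : Aˣ, Ring.inverse (φ 1) * φ ↑x⁻¹ = Ring.inverse (Ring.inverse (φ 1) * φ ↑x) :=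
  stmt13_general c d hd φ hbij h
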